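/- arXiv:1607.05192 — 5 statements merged into one kernel-verified Lean document; each statement's English description precedes it below -/
import Mathlib

section
/- For all real parameters v and c, the point P₁ = (0,0,1) is an equilibrium of the reduced replicator vector field, i.e. F_{v,c}(0,0,1) = (0,0,0), and the characteristic polynomial of the Jacobian matrix J(0,0,1) equals (X + v/4)·(X + c/4)·(X − (v−c)/4). -/
open Polynomial

set_option maxHeartbeats 1000000
noncomputable section

/-- The reduced replicator vector field of the asymmetric Hawk-Dove game. -/
def F (v c : ℝ) (p : Fin 3 → ℝ) : Fin 3 → ℝ :=
  ![ (1/4) * p 0 * (c * (2*(p 0)^2 + 2*(p 0)*(p 1 + p 2 - 1) + 2*(p 1)*(p 2) - p 1 - p 2)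
        - v * (2*(p 0) + p 1 + p 2 - 2)),
     -(1/4) * p 1 * (v * (2*(p 0) + p 1 + p 2 - 1) - c * (2*(p 0) + 2*(p 1) - 1) * (p 0 + p 2)),
     -(1/4) * p 2 * (v * (2*(p 0) + p 1 + p 2 - 1) - c * (p 0 + p 1) * (2*(p 0) + 2*(p 2) - 1)) ]

/-- The Jacobian matrix of `F v c` at `p`: the matrix of the Fréchet derivative
with respect to the standard basis. -/
def J (v c : ℝ) (p : Fin 3 → ℝ) : Matrix (Fin 3) (Fin 3) ℝ :=
  Matrix.of fun i j => fderiv ℝ (F v c) p (Pi.single j 1) i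

theorem equilibrium_P1_charpoly (v c : ℝ) :
    F v c ![0, 0, 1] = 0 ∧
    (J v c ![0, 0, 1]).charpoly
      = (X + C (v/4)) * (X + C (c/4)) * (X - C ((v - c)/4)) := by
  set q : Fin 3 → ℝ := ![0, 0, 1] with hq
  have P : ∀ k : Fin 3, HasFDerivAt (fun p : Fin 3 → ℝ => p k)
      (ContinuousLinearMap.proj (R := ℝ) k) q := fun k => hasFDerivAt_apply k q
  -- building blocks
  have B1 := (((((P 0).const_mul (2:ℝ)).add (P 1)).add (P 2)).sub_const 1)
  -- component 0
  have epow : (fun y : Fin 3 → ℝ => (2:ℝ)*(y 0 * y 0)) = (fun y : Fin 3 → ℝ => 2*(y 0)^2) := by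
    funext y; ring
  have t1 := epow ▸ (((P 0).mul (P 0)).const_mul (2:ℝ))
  have t2 := ((P 0).const_mul (2:ℝ)).mul (((P 1).add (P 2)).sub_const 1)
  have t3 := ((P 1).const_mul (2:ℝ)).mul (P 2)
  have A0 := ((((t1.add t2).add t3).sub (P 1)).sub (P 2)).const_mul c
  have A0' := (((((P 0).const_mul (2:ℝ)).add (P 1)).add (P 2)).sub_const 2).const_mul v
  have h0 := ((P 0).const_mul ((1:ℝ)/4)).mul (A0.sub A0')
  -- component 1
  have A1 := (((((P 0).const_mul (2:ℝ)).add ((P 1).const_mul (2:ℝ))).sub_const 1).const_mul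
      c).mul ((P 0).add (P 2))
  have h1 := ((P 1).const_mul (-(1/4) : ℝ)).mul ((B1.const_mul v).sub A1)
  -- component 2
  have A2 := (((P 0).add (P 1)).const_mul c).mul
      ((((P 0).const_mul (2:ℝ)).add ((P 2).const_mul (2:ℝ))).sub_const 1)
  have h2 := ((P 2).const_mul (-(1/4) : ℝ)).mul ((B1.const_mul v).sub A2)
  have hd : ∀ i, DifferentiableAt ℝ (fun p => F v c p i) q := by
    intro i; fin_cases i
    · exact h0.differentiableAt
    · exact h1.differentiableAt
    · exact h2.differentiableAt
  have ef : fderiv ℝ (F v c) q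
      = ContinuousLinearMap.pi (fun i => fderiv ℝ (fun p => F v c p i) q) := fderiv_pi hd
  have hJ : J v c q = !![(v-c)/4, 0, 0; 0, -(c/4), 0; -((2*v-c)/4), -((v-c)/4), -(v/4)] := by
    ext i j
    simp only [J, Matrix.of_apply, ef, ContinuousLinearMap.pi_apply]
    fin_cases i <;> simp only [Fin.zero_eta, Fin.mk_one, Fin.reduceFinMk, Fin.isValue]
    · rw [show fderiv ℝ (fun p => F v c p 0) q = _ from h0.fderiv]
      fin_cases j <;>
        simp [hq, Pi.single_apply, Fin.ext_iff] <;> ring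
    · rw [show fderiv ℝ (fun p => F v c p 1) q = _ from h1.fderiv]
      fin_cases j <;>
        simp [hq, Pi.single_apply, Fin.ext_iff] <;> ring
    · rw [show fderiv ℝ (fun p => F v c p 2) q = _ from h2.fderiv]
      fin_cases j <;>
        simp [hq, Pi.single_apply, Fin.ext_iff] <;> ring
  constructor
  · funext i; fin_cases i <;> simp [hq, F] <;> ring
  · rw [hJ, Matrix.charpoly, Matrix.det_fin_three]
    simp [Matrix.charmatrix_apply_eq, Matrix.charmatrix_apply_ne, Matrix.cons_val_zero, Matrix.cons_val_one,
      Matrix.head_cons, map_neg, map_zero, Fin.ext_iff]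
    ring
end
end

section
/- For all real parameters v and c, the point P₂ = (0, 1/2, 1/2) is an equilibrium of the reduced replicator vector field, i.e. F_{v,c}(0, 1/2, 1/2) = (0,0,0), and the characteristic polynomial of the Jacobian matrix J(0, 1/2, 1/2) equals (X − c/8)·(X − (c−2v)/8)·(X − (2v−c)/8). -/
open Polynomial

noncomputable section

/-!
`F v c` is polynomial, so `J v c p` is the matrix of its symbolic partial derivatives. At
`P₂ = (0, 1/2, 1/2)` that matrix has the shape `!![a, 0, 0; e, b, d; e, d, b]`: `F₁` carries
the factor `x`, which vanishes at `P₂`, and the `y ↔ z` symmetry of `F` makes the lower right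
block symmetric circulant, with eigenvectors `(1, 1)` and `(1, -1)` for `b + d` and `b - d`.
-/

open ContinuousLinearMap

theorem fderiv_apply_single_of_hasFDerivAt_apply {𝕜 ι κ : Type*} [NontriviallyNormedField 𝕜]
    [Fintype ι] [Fintype κ] [DecidableEq κ] {f : (κ → 𝕜) → ι → 𝕜} {p : κ → 𝕜}
    {M : Matrix ι κ 𝕜}
    (hf : ∀ i, HasFDerivAt (fun q => f q i) (∑ j, M i j • proj (R := 𝕜) (φ := fun _ => 𝕜) j) p)
    (i : ι) (j : κ) :
    fderiv 𝕜 f p (Pi.single j 1) i = M i j := by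
  rw [(hasFDerivAt_pi.2 hf).fderiv]
  simp [Pi.single_apply]

def jacobianF (v c : ℝ) (p : Fin 3 → ℝ) : Matrix (Fin 3) (Fin 3) ℝ :=
  let x := p 0; let y := p 1; let z := p 2
  !![(c * (2*x^2 + 2*x*(y + z - 1) + 2*y*z - y - z) - v * (2*x + y + z - 2)) / 4
        + x * (c * (4*x + 2*(y + z - 1)) - 2*v) / 4,
      x * (c * (2*x + 2*z - 1) - v) / 4,
      x * (c * (2*x + 2*y - 1) - v) / 4;
    -y * (2*v - c * (4*x + 2*y + 2*z - 1)) / 4,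
      -(v * (2*x + y + z - 1) - c * (2*x + 2*y - 1) * (x + z)) / 4 - y * (v - 2*c*(x + z)) / 4,
      -y * (v - c * (2*x + 2*y - 1)) / 4;
    -z * (2*v - c * (4*x + 2*y + 2*z - 1)) / 4,
      -z * (v - c * (2*x + 2*z - 1)) / 4,
      -(v * (2*x + y + z - 1) - c * (x + y) * (2*x + 2*z - 1)) / 4 - z * (v - 2*c*(x + y)) / 4]

theorem hasFDerivAt_F_apply (v c : ℝ) (p : Fin 3 → ℝ) (i : Fin 3) :
    HasFDerivAt (fun q => F v c q i)
      (∑ j, jacobianF v c p i j • proj (R := ℝ) (φ := fun _ => ℝ) j) p := by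
  have e0 := hasFDerivAt_apply (𝕜 := ℝ) (0 : Fin 3) p
  have e1 := hasFDerivAt_apply (𝕜 := ℝ) (1 : Fin 3) p
  have e2 := hasFDerivAt_apply (𝕜 := ℝ) (2 : Fin 3) p
  fin_cases i <;> [
    refine ((e0.const_mul (1/4 : ℝ)).mul
      ((((((((e0.pow 2).const_mul 2).add ((e0.const_mul 2).mul ((e1.add e2).sub_const 1))).add
        ((e1.const_mul 2).mul e2)).sub e1).sub e2).const_mul c).sub
        (((((e0.const_mul 2).add e1).add e2).sub_const 2).const_mul v))).congr_fderiv ?_;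
    refine ((e1.const_mul (-(1/4 : ℝ))).mul
      ((((((e0.const_mul 2).add e1).add e2).sub_const 1).const_mul v).sub
        (((((e0.const_mul 2).add (e1.const_mul 2)).sub_const 1).const_mul c).mul
          (e0.add e2)))).congr_fderiv ?_;
    refine ((e2.const_mul (-(1/4 : ℝ))).mul
      ((((((e0.const_mul 2).add e1).add e2).sub_const 1).const_mul v).sub
        (((e0.add e1).const_mul c).mul
          (((e0.const_mul 2).add (e2.const_mul 2)).sub_const 1)))).congr_fderiv ?_]
  all_goals
    ext u
    simp only [Pi.add_apply, Pi.sub_apply, Pi.mul_apply, add_apply, sub_apply, neg_apply,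
      smul_apply, proj_apply, smul_eq_mul, smul_add, smul_neg, neg_smul, nsmul_eq_mul,
      Fin.zero_eta, Fin.mk_one, Fin.reduceFinMk, Nat.cast_ofNat, Fin.sum_univ_three, jacobianF,
      Matrix.of_apply, Matrix.cons_val', Matrix.cons_val_fin_one, Matrix.cons_val,
      Matrix.cons_val_zero, Matrix.cons_val_one]
    ring

theorem J_eq_jacobianF (v c : ℝ) (p : Fin 3 → ℝ) : J v c p = jacobianF v c p := by
  ext i j
  exact fderiv_apply_single_of_hasFDerivAt_apply (hasFDerivAt_F_apply v c p) i j

theorem F_P2 (v c : ℝ) : F v c ![0, 1/2, 1/2] = 0 := by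
  ext i
  fin_cases i <;> norm_num [F, Matrix.cons_val_two, Matrix.tail_cons, Matrix.head_cons]

theorem J_P2 (v c : ℝ) :
    J v c ![0, 1/2, 1/2] =
      !![(2*v - c)/8, 0, 0; (c - 2*v)/8, (c - v)/8, -v/8; (c - 2*v)/8, -v/8, (c - v)/8] := by
  rw [J_eq_jacobianF]
  ext i j
  fin_cases i <;> fin_cases j <;>
    norm_num [jacobianF, Matrix.cons_val_two, Matrix.tail_cons, Matrix.head_cons] <;> ring

theorem charpoly_blockTriangular_circulant {R : Type*} [CommRing R] (a b d e : R) :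
    (!![a, 0, 0; e, b, d; e, d, b]).charpoly =
      (X - C a) * (X - C (b + d)) * (X - C (b - d)) := by
  simp [Matrix.charpoly, Matrix.det_fin_three]
  ring

theorem equilibrium_P2_charpoly (v c : ℝ) :
    F v c ![0, 1/2, 1/2] = 0 ∧
    (J v c ![0, 1/2, 1/2]).charpoly
      = (X - C (c/8)) * (X - C ((c - 2*v)/8)) * (X - C ((2*v - c)/8)) := by
  refine ⟨F_P2 v c, ?_⟩
  rw [J_P2, charpoly_blockTriangular_circulant]
  ring_nf
end
end

section
/- For all real parameters v and c, the point P₅ = (1,0,0) is an equilibrium of the reduced replicator vector field, i.e. F_{v,c}(1,0,0) = (0,0,0), and the characteristic polynomial of the Jacobian matrix J(1,0,0) equals (X − (c−v)/2)·(X − (c−v)/4)². -/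
open Polynomial

noncomputable section

/-! At `P₅ = (1, 0, 0)` the last two components of `F` carry the factors `p 1` and `p 2`, which
vanish there, so the last two rows of the Jacobian are `(c - v) / 4` times unit vectors. The
Jacobian is therefore upper triangular with diagonal `((c - v) / 2, (c - v) / 4, (c - v) / 4)`,
and the characteristic polynomial of a triangular matrix is `∏ (X - dᵢ)` over its diagonal. -/

open scoped Matrix

theorem fderiv_apply_eq_fderiv_apply {𝕜 E ι : Type*} {F' : ι → Type*} [NontriviallyNormedField 𝕜]
    [NormedAddCommGroup E] [NormedSpace 𝕜 E] [Fintype ι] [∀ i, NormedAddCommGroup (F' i)]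
    [∀ i, NormedSpace 𝕜 (F' i)] {f : E → (i : ι) → F' i} {x : E}
    (hf : ∀ i, DifferentiableAt 𝕜 (fun y => f y i) x) (u : E) (i : ι) :
    fderiv 𝕜 f x u i = fderiv 𝕜 (fun y => f y i) x u := by
  rw [fderiv_pi hf, ContinuousLinearMap.pi_apply]

theorem differentiable_F_apply (v c : ℝ) (i : Fin 3) : Differentiable ℝ (fun p => F v c p i) := by
  fin_cases i <;> simp only [F, Fin.zero_eta, Fin.mk_one, Fin.reduceFinMk, Matrix.cons_val] <;> fun_prop

theorem F_P5_eq_zero (v c : ℝ) : F v c ![1, 0, 0] = 0 := by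
  ext i
  fin_cases i <;> simp [F]

def jacobianP5 (v c : ℝ) : Matrix (Fin 3) (Fin 3) ℝ :=
  !![(c - v) / 2, (c - v) / 4, (c - v) / 4;
     0,           (c - v) / 4, 0;
     0,           0,           (c - v) / 4]

theorem fderiv_F_P5_apply (v c : ℝ) (u : Fin 3 → ℝ) :
    fderiv ℝ (F v c) ![1, 0, 0] u = jacobianP5 v c *ᵥ u := by
  ext i
  rw [fderiv_apply_eq_fderiv_apply fun i => (differentiable_F_apply v c i).differentiableAt]
  fin_cases i <;>
    simp (disch := fun_prop) [F, jacobianP5, fderiv_fun_sub, fderiv_fun_add, fderiv_fun_mul,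
      fderiv_fun_pow, fderiv_apply, Matrix.mulVec, dotProduct, Fin.sum_univ_three] <;>
    ring

theorem J_P5_eq_jacobianP5 (v c : ℝ) : J v c ![1, 0, 0] = jacobianP5 v c := by
  ext i j
  rw [J, Matrix.of_apply, fderiv_F_P5_apply, Matrix.mulVec_single_one, Matrix.col_apply]

theorem jacobianP5_isUpperTriangular (v c : ℝ) : (jacobianP5 v c).IsUpperTriangular := by
  intro i j hij
  fin_cases i <;> fin_cases j <;> simp_all [jacobianP5]

theorem charpoly_jacobianP5 (v c : ℝ) :
    (jacobianP5 v c).charpoly = (X - C ((c - v) / 2)) * (X - C ((c - v) / 4)) ^ 2 := by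
  rw [Matrix.charpoly_of_isUpperTriangular _ (jacobianP5_isUpperTriangular v c),
    Fin.prod_univ_three]
  simp only [jacobianP5, Matrix.of_apply, Matrix.cons_val', Matrix.cons_val_zero,
    Matrix.cons_val_one, Matrix.cons_val, Matrix.cons_val_fin_one]
  ring

theorem equilibrium_P5_charpoly (v c : ℝ) :
    F v c ![1, 0, 0] = 0 ∧
    (J v c ![1, 0, 0]).charpoly
      = (X - C ((c - v)/2)) * (X - C ((c - v)/4))^2 :=
  ⟨F_P5_eq_zero v c, by rw [J_P5_eq_jacobianP5, charpoly_jacobianP5]⟩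
end
end

section
/- For all real parameters v and c with c ≠ 0, the point P₆ = (v/c, 0, 0) is an equilibrium of the reduced replicator vector field, i.e. F_{v,c}(v/c, 0, 0) = (0,0,0), and the characteristic polynomial of the Jacobian matrix J(v/c, 0, 0) equals X²·(X − v·(v−c)/(2c)). -/
/-! At `P₆ = (v/c, 0, 0)` the second and third components of `F` are products of two factors
that both vanish there (the coordinate `y` resp. `z`, and its fitness difference), so the
corresponding rows of the Jacobian are zero. The Jacobian is then upper triangular with
diagonal `(J₀₀, 0, 0)`. On the `x`-axis the first component is `(c/2)·x·(x - 1)·(x - v/c)`, and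
`v/c` is a simple root of it, so `J₀₀ = (c/2)·(v/c)·(v/c - 1) = v(v - c)/(2c)`. -/

open Polynomial

noncomputable section

namespace Matrix

theorem charpoly_eq_of_forall_row_eq_zero {R : Type*} [CommRing R] {n : ℕ}
    (M : Matrix (Fin (n + 1)) (Fin (n + 1)) R) (hM : ∀ i, i ≠ 0 → M i = 0) :
    M.charpoly = X ^ n * (X - C (M 0 0)) := by
  have hupper : M.IsUpperTriangular := fun i j hji => by
    simp [hM i ((Fin.zero_le j).trans_lt hji).ne']
  rw [charpoly_of_isUpperTriangular M hupper, Fin.prod_univ_succ, mul_comm]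
  simp [hM _ (Fin.succ_ne_zero _)]

end Matrix

section Calculus

variable {𝕜 E : Type*} [NontriviallyNormedField 𝕜] [NormedAddCommGroup E] [NormedSpace 𝕜 E]

theorem fderiv_mul_eq_zero_of_eq_zero {f g : E → 𝕜} {x : E}
    (hf : DifferentiableAt 𝕜 f x) (hg : DifferentiableAt 𝕜 g x) (hfx : f x = 0) (hgx : g x = 0) :
    fderiv 𝕜 (fun y => f y * g y) x = 0 := by
  refine HasFDerivAt.fderiv ((hf.hasFDerivAt.fun_mul hg.hasFDerivAt).congr_fderiv ?_)
  ext
  simp [hfx, hgx]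

theorem hasDerivAt_mul_of_right_eq_zero {f g : 𝕜 → 𝕜} {g' x : 𝕜}
    (hf : DifferentiableAt 𝕜 f x) (hg : HasDerivAt g g' x) (hgx : g x = 0) :
    HasDerivAt (fun y => f y * g y) (f x * g') x := by
  simpa [hgx] using hf.hasDerivAt.fun_mul hg

theorem fderiv_apply_single_eq_deriv_update {ι : Type*} [Fintype ι] [DecidableEq ι]
    {Φ : (ι → 𝕜) → E} {p : ι → 𝕜} (hΦ : DifferentiableAt 𝕜 Φ p) (j : ι) :
    fderiv 𝕜 Φ p (Pi.single j 1) = deriv (fun t => Φ (Function.update p j t)) (p j) := by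
  rw [← Function.update_eq_self j p] at hΦ
  have hchain := hΦ.hasFDerivAt.comp_hasDerivAt (p j) (hasDerivAt_update p j (p j))
  rw [Function.update_eq_self] at hchain
  exact hchain.deriv.symm

end Calculus

section HawkDove

variable {v c : ℝ}

theorem differentiable_F : Differentiable ℝ (F v c) := by
  refine differentiable_pi.2 fun i => ?_
  fin_cases i <;>
    simp only [F, Fin.zero_eta, Fin.mk_one, Fin.reduceFinMk, Matrix.cons_val_zero,
      Matrix.cons_val_one, Matrix.cons_val] <;>
    fun_prop

theorem J_apply (p : Fin 3 → ℝ) (i j : Fin 3) :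
    J v c p i j = fderiv ℝ (fun q => F v c q i) p (Pi.single j 1) := by
  rw [fderiv_apply (differentiable_F p)]
  rfl

theorem F_apply_zero_on_xAxis (hc : c ≠ 0) (t : ℝ) :
    F v c ![t, 0, 0] 0 = c / 2 * t * (t - 1) * (t - v / c) := by
  simp only [F, Matrix.cons_val_zero, Matrix.cons_val_one, Matrix.cons_val]
  field_simp
  ring

theorem F_eq_zero_at_P6 (hc : c ≠ 0) : F v c ![v / c, 0, 0] = 0 := by
  funext i
  fin_cases i
  · simp [F_apply_zero_on_xAxis hc]
  all_goals simp [F]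

theorem J_row_eq_zero_at_P6 (hc : c ≠ 0) (i : Fin 3) (hi : i ≠ 0) :
    J v c ![v / c, 0, 0] i = 0 := by
  funext j
  rw [J_apply]
  obtain rfl | rfl : i = 1 ∨ i = 2 := by fin_cases i <;> simp_all
  all_goals
    simp only [F, Matrix.cons_val_zero, Matrix.cons_val_one, Matrix.cons_val]
    rw [fderiv_mul_eq_zero_of_eq_zero (by fun_prop) (by fun_prop) (by simp)
      (by
        simp only [Matrix.cons_val_zero, Matrix.cons_val_one, Matrix.cons_val, add_zero, mul_zero]
        field_simp
        ring)]
    rfl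

theorem J_zero_zero_at_P6 (hc : c ≠ 0) :
    J v c ![v / c, 0, 0] 0 0 = v * (v - c) / (2 * c) := by
  have hline : (fun t => F v c (Function.update ![v / c, 0, 0] 0 t) 0) =
      fun t => c / 2 * t * (t - 1) * (t - v / c) := by
    funext t
    rw [← F_apply_zero_on_xAxis hc]
    exact congrArg (F v c · 0) (Fin.update_cons_zero _ _ _)
  have hroot : HasDerivAt (fun t => c / 2 * t * (t - 1) * (t - v / c))
      (c / 2 * (v / c) * (v / c - 1) * 1) (v / c) :=
    hasDerivAt_mul_of_right_eq_zero (by fun_prop) ((hasDerivAt_id' _).sub_const _) (sub_self _)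
  rw [J_apply, fderiv_apply_single_eq_deriv_update (differentiable_pi.1 differentiable_F 0 _),
    hline, Matrix.cons_val_zero, hroot.deriv]
  field_simp

end HawkDove

theorem equilibrium_P6_charpoly (v c : ℝ) (hc : c ≠ 0) :
    F v c ![v/c, 0, 0] = 0 ∧
    (J v c ![v/c, 0, 0]).charpoly
      = X^2 * (X - C (v*(v - c)/(2*c))) := by
  refine ⟨F_eq_zero_at_P6 hc, ?_⟩
  rw [Matrix.charpoly_eq_of_forall_row_eq_zero _ (J_row_eq_zero_at_P6 hc), J_zero_zero_at_P6 hc]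
end
end

section
/- If v < 0, then every root of the characteristic polynomial of the Jacobian matrix J(0,0,0) of the reduced replicator vector field at the equilibrium P₇ = (0,0,0) is a negative real number, and if v > 0 then every root is positive; explicitly, the eigenvalues v/2 and v/4 (the latter with multiplicity two) all share the sign of v, so P₇ is never a saddle point. -/
open Polynomial

noncomputable section

def L (v : ℝ) : (Fin 3 → ℝ) →L[ℝ] (Fin 3 → ℝ) :=
  ContinuousLinearMap.pi ![(v/2) • ContinuousLinearMap.proj 0,
    (v/4) • ContinuousLinearMap.proj 1, (v/4) • ContinuousLinearMap.proj 2]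

lemma hF (v c : ℝ) : HasFDerivAt (F v c) (L v) ![0,0,0] := by
  rw [hasFDerivAt_pi']
  intro i
  fin_cases i
  · show HasFDerivAt (fun x : Fin 3 → ℝ =>
      ((1/4) * x 0) * (c * (2*(x 0)^2 + 2*(x 0)*(x 1 + x 2 - 1) + 2*(x 1)*(x 2) - x 1 - x 2)
        - v * (2*(x 0) + x 1 + x 2 - 2))) _ _
    have hB : DifferentiableAt ℝ (fun x : Fin 3 → ℝ =>
        c * (2*(x 0)^2 + 2*(x 0)*(x 1 + x 2 - 1) + 2*(x 1)*(x 2) - x 1 - x 2)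
        - v * (2*(x 0) + x 1 + x 2 - 2)) ![0,0,0] := by fun_prop
    have h1 : HasFDerivAt (fun x : Fin 3 → ℝ => (1/4:ℝ) * x 0)
        ((1/4:ℝ) • ContinuousLinearMap.proj (0 : Fin 3)) ![0,0,0] :=
      (ContinuousLinearMap.proj (R := ℝ) (φ := fun _ : Fin 3 => ℝ) 0).hasFDerivAt.const_mul _
    have h := h1.mul hB.hasFDerivAt
    refine h.congr_fderiv ?_
    ext x
    simp [L, Matrix.cons_val_zero, smul_smul]
    exact Or.inl (by ring)
  · show HasFDerivAt (fun x : Fin 3 → ℝ =>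
      (-(1/4) * x 1) * (v * (2*(x 0) + x 1 + x 2 - 1) - c * (2*(x 0) + 2*(x 1) - 1) * (x 0 + x 2))) _ _
    have hB : DifferentiableAt ℝ (fun x : Fin 3 → ℝ => v * (2*(x 0) + x 1 + x 2 - 1) - c * (2*(x 0) + 2*(x 1) - 1) * (x 0 + x 2)) ![0,0,0] := by fun_prop
    have h1 : HasFDerivAt (fun x : Fin 3 → ℝ => (-(1/4):ℝ) * x 1)
        ((-(1/4):ℝ) • ContinuousLinearMap.proj (1 : Fin 3)) ![0,0,0] :=
      (ContinuousLinearMap.proj (R := ℝ) (φ := fun _ : Fin 3 => ℝ) 1).hasFDerivAt.const_mul _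
    have h := h1.mul hB.hasFDerivAt
    refine h.congr_fderiv ?_
    ext x
    simp [L, smul_smul]
    exact Or.inl (by ring)
  · show HasFDerivAt (fun x : Fin 3 → ℝ =>
      (-(1/4) * x 2) * (v * (2*(x 0) + x 1 + x 2 - 1) - c * (x 0 + x 1) * (2*(x 0) + 2*(x 2) - 1))) _ _
    have hB : DifferentiableAt ℝ (fun x : Fin 3 → ℝ => v * (2*(x 0) + x 1 + x 2 - 1) - c * (x 0 + x 1) * (2*(x 0) + 2*(x 2) - 1)) ![0,0,0] := by fun_prop
    have h1 : HasFDerivAt (fun x : Fin 3 → ℝ => (-(1/4):ℝ) * x 2)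
        ((-(1/4):ℝ) • ContinuousLinearMap.proj (2 : Fin 3)) ![0,0,0] :=
      (ContinuousLinearMap.proj (R := ℝ) (φ := fun _ : Fin 3 => ℝ) 2).hasFDerivAt.const_mul _
    have h := h1.mul hB.hasFDerivAt
    refine h.congr_fderiv ?_
    ext x
    simp [L, smul_smul]
    exact Or.inl (by ring)


lemma Jval (v c : ℝ) : J v c ![0,0,0] = Matrix.diagonal ![v/2, v/4, v/4] := by
  have hd : fderiv ℝ (F v c) ![0,0,0] = L v := (hF v c).fderiv
  ext i j
  rw [J, Matrix.of_apply, hd]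
  fin_cases i <;> fin_cases j <;>
    simp [L, Matrix.diagonal, Pi.single_apply]

lemma charpoly_eq (v c : ℝ) : (J v c ![0,0,0]).charpoly
    = (X - C (v/2)) * (X - C (v/4))^2 := by
  rw [Jval, Matrix.charpoly, Matrix.det_fin_three]
  simp [Matrix.charmatrix_apply_eq, Matrix.charmatrix_apply_ne, Matrix.diagonal]
  ring

lemma root_cases (v c : ℝ) (μ : ℂ) (h : aeval μ ((J v c ![0, 0, 0]).charpoly) = 0) :
    μ = ((v/2 : ℝ) : ℂ) ∨ μ = ((v/4 : ℝ) : ℂ) := by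
  rw [charpoly_eq] at h
  have h2 : (μ - ((v/2:ℝ):ℂ)) * (μ - ((v/4:ℝ):ℂ))^2 = 0 := by
    simpa [map_mul, map_pow, map_sub, aeval_X, aeval_C] using h
  rcases mul_eq_zero.mp h2 with h | h
  · exact Or.inl (sub_eq_zero.mp h)
  · exact Or.inr (sub_eq_zero.mp ((pow_eq_zero_iff two_ne_zero).mp h))

lemma root_cases_real (v c : ℝ) (μ : ℝ) (h : (J v c ![0, 0, 0]).charpoly.IsRoot μ) :
    μ = v/2 ∨ μ = v/4 := by
  rw [charpoly_eq] at h
  have h2 : (μ - v/2) * (μ - v/4)^2 = 0 := by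
    simpa [IsRoot, eval_mul, eval_pow, eval_sub, eval_X, eval_C] using h
  rcases mul_eq_zero.mp h2 with h | h
  · exact Or.inl (by linarith [sub_eq_zero.mp h])
  · exact Or.inr (by linarith [sub_eq_zero.mp ((pow_eq_zero_iff two_ne_zero).mp h)])

theorem P7_node_never_saddle (v c : ℝ) :
    (v < 0 →
      (v/2 < 0 ∧ v/4 < 0) ∧
      ∀ μ : ℂ, aeval μ ((J v c ![0, 0, 0]).charpoly) = 0 →
        ∃ r : ℝ, μ = (r : ℂ) ∧ r < 0) ∧
    (0 < v →
      (0 < v/2 ∧ 0 < v/4) ∧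
      ∀ μ : ℂ, aeval μ ((J v c ![0, 0, 0]).charpoly) = 0 →
        ∃ r : ℝ, μ = (r : ℂ) ∧ 0 < r) ∧
    ¬ ∃ μ₁ μ₂ : ℝ, (J v c ![0, 0, 0]).charpoly.IsRoot μ₁ ∧
      (J v c ![0, 0, 0]).charpoly.IsRoot μ₂ ∧ μ₁ < 0 ∧ 0 < μ₂ := by
  refine ⟨?_, ?_, ?_⟩
  · intro hv
    refine ⟨⟨by linarith, by linarith⟩, fun μ hμ => ?_⟩
    rcases root_cases v c μ hμ with h | h
    · exact ⟨v/2, h, by linarith⟩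
    · exact ⟨v/4, h, by linarith⟩
  · intro hv
    refine ⟨⟨by linarith, by linarith⟩, fun μ hμ => ?_⟩
    rcases root_cases v c μ hμ with h | h
    · exact ⟨v/2, h, by linarith⟩
    · exact ⟨v/4, h, by linarith⟩
  · rintro ⟨μ₁, μ₂, h₁, h₂, hn, hp⟩
    rcases root_cases_real v c μ₁ h₁ with h | h <;>
      rcases root_cases_real v c μ₂ h₂ with h' | h' <;> subst h <;> subst h' <;> linarith
end
end
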